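/- For every α ∈ (0,1), every l > 0 and every t > 0, one has the identity ∫_0^t l·α·τ^(−(α+1)) · M_α(l·τ^(−α)) dτ = (1/π) ∫_0^π exp(−u_α(φ) · (l·t^(−α))^(1/(1−α))) dφ. -/

import Mathlib

/-- The auxiliary kernel in the Mikusiński integral representation of the
M-Wright function: `u_α(φ) = (sin(αφ)/sin φ)^(α/(1−α)) · sin((1−α)φ)/sin φ`. -/
noncomputable def mwrightKernel (α φ : ℝ) : ℝ :=
  (Real.sin (α * φ) / Real.sin φ) ^ (α / (1 - α)) *
    (Real.sin ((1 - α) * φ) / Real.sin φ)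

/-- The M-Wright function `M_α`, via its Mikusiński integral representation:
`M_α(x) = (x^(α/(1−α))/(π(1−α))) ∫_0^π u_α(φ) exp(−u_α(φ) x^(1/(1−α))) dφ`. -/
noncomputable def mwright (α x : ℝ) : ℝ :=
  x ^ (α / (1 - α)) / (Real.pi * (1 - α)) *
    ∫ φ in Set.Ioo 0 Real.pi,
      mwrightKernel α φ * Real.exp (-(mwrightKernel α φ) * x ^ (1 / (1 - α)))

open MeasureTheory Set Filter

lemma mwrightKernel_pos {α φ : ℝ} (hα0 : 0 < α) (hα1 : α < 1)
    (hφ0 : 0 < φ) (hφπ : φ < Real.pi) : 0 < mwrightKernel α φ := by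
  have hs : 0 < Real.sin φ := Real.sin_pos_of_pos_of_lt_pi hφ0 hφπ
  have h1 : 0 < Real.sin (α * φ) :=
    Real.sin_pos_of_pos_of_lt_pi (by positivity) (by nlinarith)
  have h2 : 0 < Real.sin ((1 - α) * φ) :=
    Real.sin_pos_of_pos_of_lt_pi (by nlinarith) (by nlinarith)
  unfold mwrightKernel
  positivity

lemma mwrightKernel_measurable (α : ℝ) : Measurable (mwrightKernel α) := by
  unfold mwrightKernel
  fun_prop

lemma exp_neg_le_four_div_sq {x : ℝ} (hx : 0 < x) : Real.exp (-x) ≤ 4 / x ^ 2 := by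
  have h1 : x / 2 + 1 ≤ Real.exp (x / 2) := Real.add_one_le_exp (x / 2)
  have h2 : Real.exp (x / 2) * Real.exp (x / 2) = Real.exp x := by
    rw [← Real.exp_add]; ring_nf
  have h3 : x ^ 2 / 4 ≤ Real.exp x := by nlinarith [Real.exp_pos (x / 2)]
  rw [Real.exp_neg, show (4:ℝ) / x ^ 2 = (x ^ 2 / 4)⁻¹ by field_simp]
  gcongr

lemma ftc_deriv {c b : ℝ} {τ : ℝ} (hτ : 0 < τ) :
    HasDerivAt (fun s : ℝ => Real.exp (-(c * s ^ (-b))))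
      (c * b * τ ^ (-b - 1) * Real.exp (-(c * τ ^ (-b)))) τ := by
  have h1 : HasDerivAt (fun s : ℝ => s ^ (-b)) (-b * τ ^ (-b - 1)) τ :=
    Real.hasDerivAt_rpow_const (Or.inl hτ.ne')
  have h2 : HasDerivAt (fun s : ℝ => -(c * s ^ (-b))) (c * b * τ ^ (-b - 1)) τ := by
    have := (h1.const_mul c).neg
    exact this.congr_deriv (by ring)
  have h3 := h2.exp
  convert h3 using 1; ring

lemma ftc_integrableOn {c b t : ℝ} (hc : 0 < c) (hb : 0 < b) (ht : 0 < t) :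
    IntegrableOn (fun τ : ℝ => c * b * τ ^ (-b - 1) * Real.exp (-(c * τ ^ (-b))))
      (Set.Ioo 0 t) := by
  have hmeas : Measurable fun τ : ℝ => c * b * τ ^ (-b - 1) * Real.exp (-(c * τ ^ (-b))) := by
    fun_prop
  have hmaj : IntegrableOn (fun τ : ℝ => 4 * b / c * τ ^ (b - 1)) (Set.Ioo 0 t) := by
    have := (intervalIntegral.intervalIntegrable_rpow' (a := 0) (b := t)
      (r := b - 1) (by linarith)).1
    exact (this.mono_set Set.Ioo_subset_Ioc_self).const_mul _
  refine hmaj.integrable.mono' hmeas.aestronglyMeasurable ?_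
  filter_upwards [ae_restrict_mem measurableSet_Ioo] with τ hτ
  have hτ0 : (0 : ℝ) < τ := hτ.1
  have hτb : (0 : ℝ) < τ ^ (-b) := Real.rpow_pos_of_pos hτ0 _
  have hτb1 : (0 : ℝ) < τ ^ (-b - 1) := Real.rpow_pos_of_pos hτ0 _
  rw [Real.norm_eq_abs, abs_of_nonneg (by positivity)]
  have hexp : Real.exp (-(c * τ ^ (-b))) ≤ 4 / (c * τ ^ (-b)) ^ 2 :=
    exp_neg_le_four_div_sq (by positivity)
  calc c * b * τ ^ (-b - 1) * Real.exp (-(c * τ ^ (-b)))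
      ≤ c * b * τ ^ (-b - 1) * (4 / (c * τ ^ (-b)) ^ 2) := by
        exact mul_le_mul_of_nonneg_left hexp (by positivity)
    _ = 4 * b / c * τ ^ (b - 1) := by
        have e2 : τ ^ (-b - 1) = τ ^ (b - 1) * (τ ^ (-b) * τ ^ (-b)) := by
          rw [← Real.rpow_add hτ0, ← Real.rpow_add hτ0]
          ring_nf
        rw [e2]
        field_simp

lemma ftc_exp {c b t : ℝ} (hc : 0 < c) (hb : 0 < b) (ht : 0 < t) :
    ∫ τ in Set.Ioo 0 t, c * b * τ ^ (-b - 1) * Real.exp (-(c * τ ^ (-b)))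
      = Real.exp (-(c * t ^ (-b))) := by
  have hint : IntegrableOn
      (fun τ : ℝ => c * b * τ ^ (-b - 1) * Real.exp (-(c * τ ^ (-b)))) (Set.Ioo 0 t) :=
    ftc_integrableOn hc hb ht
  have hint' : IntervalIntegrable
      (fun τ : ℝ => c * b * τ ^ (-b - 1) * Real.exp (-(c * τ ^ (-b)))) volume 0 t :=
    (intervalIntegrable_iff_integrableOn_Ioo_of_le ht.le).mpr hint
  have h0 : Tendsto (fun s : ℝ => Real.exp (-(c * s ^ (-b)))) (nhdsWithin 0 (Set.Ioi 0))
      (nhds 0) := by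
    have h1 : Tendsto (fun s : ℝ => s ^ (-b)) (nhdsWithin 0 (Set.Ioi 0)) atTop := by
      have h2 : Tendsto (fun s : ℝ => s ^ b) (nhdsWithin 0 (Set.Ioi 0))
          (nhdsWithin 0 (Set.Ioi 0)) := by
        apply tendsto_nhdsWithin_of_tendsto_nhds_of_eventually_within
        · have hco : ContinuousAt (fun s : ℝ => s ^ b) 0 :=
            Real.continuousAt_rpow_const 0 b (Or.inr hb.le)
          have := hco.continuousWithinAt (s := Set.Ioi 0)
          simpa [Real.zero_rpow hb.ne'] using this.tendsto
        · filter_upwards [self_mem_nhdsWithin] with s hs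
          exact Real.rpow_pos_of_pos hs _
      have h3 := h2.inv_tendsto_nhdsGT_zero
      apply h3.congr'
      filter_upwards [self_mem_nhdsWithin] with s hs
      simp only [Pi.inv_apply]
      rw [← Real.rpow_neg (le_of_lt hs)]
    have h4 : Tendsto (fun s : ℝ => -(c * s ^ (-b))) (nhdsWithin 0 (Set.Ioi 0)) atBot := by
      rw [← Filter.tendsto_neg_atTop_iff]
      simp only [neg_neg]
      exact h1.const_mul_atTop hc
    exact Real.tendsto_exp_atBot.comp h4
  have hT : Tendsto (fun s : ℝ => Real.exp (-(c * s ^ (-b)))) (nhdsWithin t (Set.Iio t))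
      (nhds (Real.exp (-(c * t ^ (-b))))) := by
    have hco : ContinuousAt (fun s : ℝ => Real.exp (-(c * s ^ (-b)))) t := by
      have h5 : ContinuousAt (fun s : ℝ => s ^ (-b)) t :=
        Real.continuousAt_rpow_const t (-b) (Or.inl ht.ne')
      exact Real.continuous_exp.continuousAt.comp ((h5.const_mul c).neg)
    exact hco.continuousWithinAt.tendsto
  have key := intervalIntegral.integral_eq_sub_of_hasDerivAt_of_tendsto ht
    (fun τ hτ => ftc_deriv hτ.1) hint' h0 hT
  rw [intervalIntegral.integral_of_le ht.le, integral_Ioc_eq_integral_Ioo] at key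
  rw [key, sub_zero]

/-- The Fubini-type identity in the proof of Lemma 5.3(iii):
`∫_0^t lα τ^{−(α+1)} M_α(l τ^{−α}) dτ
  = (1/π) ∫_0^π exp(−u_α(φ) (l t^{−α})^{1/(1−α)}) dφ`. -/
theorem mwright_kernel_integral_eq
    (α l t : ℝ) (hα : α ∈ Set.Ioo (0:ℝ) 1) (hl : 0 < l) (ht : 0 < t) :
    ∫ τ in Set.Ioo 0 t, l * α * τ ^ (-(α + 1)) * mwright α (l * τ ^ (-α))
      = (1 / Real.pi) * ∫ φ in Set.Ioo 0 Real.pi,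
          Real.exp (-(mwrightKernel α φ) * (l * t ^ (-α)) ^ (1 / (1 - α))) := by
  obtain ⟨hα0, hα1⟩ := hα
  have h1α : (0:ℝ) < 1 - α := by linarith
  set b : ℝ := α / (1 - α) with hbdef
  have hb : 0 < b := by positivity
  set K : ℝ := l ^ ((1:ℝ) / (1 - α)) with hKdef
  have hK : 0 < K := Real.rpow_pos_of_pos hl _
  have hab : b * (1 - α) = α := by rw [hbdef]; field_simp
  -- the power identity (l s^{-α})^{1/(1-α)} = K s^{-b}
  have hpow : ∀ s : ℝ, 0 < s → (l * s ^ (-α)) ^ ((1:ℝ) / (1 - α)) = K * s ^ (-b) := by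
    intro s hs
    rw [Real.mul_rpow hl.le (Real.rpow_nonneg hs.le _), ← Real.rpow_mul hs.le]
    have hexp : -α * ((1:ℝ) / (1 - α)) = -b := by rw [hbdef]; ring
    rw [hexp, hKdef]
  -- the constant identity
  have hconst : ∀ τ : ℝ, 0 < τ →
      l * α * τ ^ (-(α + 1)) * ((l * τ ^ (-α)) ^ b / (Real.pi * (1 - α)))
        = 1 / Real.pi * (K * b * τ ^ (-b - 1)) := by
    intro τ hτ
    have hp1 : (l * τ ^ (-α)) ^ b = l ^ b * τ ^ (-α * b) := by
      rw [Real.mul_rpow hl.le (Real.rpow_nonneg hτ.le _), ← Real.rpow_mul hτ.le]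
    have hτ1 : τ ^ (-b - 1) = τ ^ (-(α + 1)) * τ ^ (-α * b) := by
      rw [← Real.rpow_add hτ]
      congr 1
      rw [hbdef]
      field_simp
      ring
    have hKeq : K = l * l ^ b := by
      rw [hKdef, show (1:ℝ) / (1 - α) = 1 + b by rw [hbdef]; field_simp; ring,
        Real.rpow_add hl, Real.rpow_one]
    rw [hp1, hτ1, hKeq, hbdef]
    field_simp
  -- the double integrand
  set u : ℝ → ℝ := mwrightKernel α with hudef
  have hu : Measurable u := mwrightKernel_measurable α
  have hupos : ∀ φ ∈ Set.Ioo 0 Real.pi, 0 < u φ := fun φ hφ =>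
    mwrightKernel_pos hα0 hα1 hφ.1 hφ.2
  -- Step A : pointwise identity in τ
  have hA : ∀ τ ∈ Set.Ioo 0 t,
      l * α * τ ^ (-(α + 1)) * mwright α (l * τ ^ (-α))
        = ∫ φ in Set.Ioo 0 Real.pi,
            1 / Real.pi * (u φ * K * b * τ ^ (-b - 1) *
              Real.exp (-(u φ * K * τ ^ (-b)))) := by
    intro τ hτ
    unfold mwright
    rw [← hbdef, ← hudef]
    rw [show l * α * τ ^ (-(α + 1)) * ((l * τ ^ (-α)) ^ b / (Real.pi * (1 - α)) *
        ∫ φ in Set.Ioo 0 Real.pi, u φ * Real.exp (-(u φ) * (l * τ ^ (-α)) ^ (1 / (1 - α))))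
        = (l * α * τ ^ (-(α + 1)) * ((l * τ ^ (-α)) ^ b / (Real.pi * (1 - α)))) *
          ∫ φ in Set.Ioo 0 Real.pi, u φ * Real.exp (-(u φ) * (l * τ ^ (-α)) ^ (1 / (1 - α)))
        from by ring]
    rw [hconst τ hτ.1, ← MeasureTheory.integral_const_mul]
    refine integral_congr_ae (Filter.Eventually.of_forall fun φ => ?_)
    have harg : -(u φ) * (l * τ ^ (-α)) ^ ((1:ℝ) / (1 - α)) = -(u φ * K * τ ^ (-b)) := by
      rw [hpow τ hτ.1]; ring
    dsimp only
    rw [harg]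
    ring
  -- the inner τ-integral, computed for each φ in (0, π)
  have hinner : ∀ φ ∈ Set.Ioo 0 Real.pi,
      (∫ τ in Set.Ioo 0 t,
          1 / Real.pi * (u φ * K * b * τ ^ (-b - 1) * Real.exp (-(u φ * K * τ ^ (-b)))))
        = 1 / Real.pi * Real.exp (-(u φ * K * t ^ (-b))) := by
    intro φ hφ
    have hc : 0 < u φ * K := mul_pos (hupos φ hφ) hK
    rw [MeasureTheory.integral_const_mul, ftc_exp hc hb ht]
  -- Fubini
  have hFmeas : AEStronglyMeasurable
      (fun p : ℝ × ℝ => 1 / Real.pi * (u p.2 * K * b * p.1 ^ (-b - 1) *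
        Real.exp (-(u p.2 * K * p.1 ^ (-b)))))
      ((volume.restrict (Set.Ioo 0 t)).prod (volume.restrict (Set.Ioo 0 Real.pi))) := by
    apply Measurable.aestronglyMeasurable
    fun_prop
  have hFint : Integrable
      (fun p : ℝ × ℝ => 1 / Real.pi * (u p.2 * K * b * p.1 ^ (-b - 1) *
        Real.exp (-(u p.2 * K * p.1 ^ (-b)))))
      ((volume.restrict (Set.Ioo 0 t)).prod (volume.restrict (Set.Ioo 0 Real.pi))) := by
    rw [MeasureTheory.integrable_prod_iff' hFmeas]
    constructor
    · filter_upwards [ae_restrict_mem measurableSet_Ioo] with φ hφ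
      have hc : 0 < u φ * K := mul_pos (hupos φ hφ) hK
      exact ((ftc_integrableOn hc hb ht).const_mul (1 / Real.pi))
    · -- integrability of φ ↦ ∫ τ, ‖F τ φ‖
      have hg : Measurable fun φ : ℝ => 1 / Real.pi * Real.exp (-(u φ * K * t ^ (-b))) := by
        fun_prop
      have hgint : IntegrableOn
          (fun φ : ℝ => 1 / Real.pi * Real.exp (-(u φ * K * t ^ (-b))))
          (Set.Ioo 0 Real.pi) := by
        refine Integrable.mono' (g := fun _ : ℝ => 1 / Real.pi)
          ((integrableOn_const_iff (C := 1 / Real.pi)).mpr (Or.inr measure_Ioo_lt_top))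
          hg.aestronglyMeasurable ?_
        filter_upwards [ae_restrict_mem measurableSet_Ioo] with φ hφ
        have hc : 0 < u φ * K := mul_pos (hupos φ hφ) hK
        have htb : 0 < t ^ (-b) := Real.rpow_pos_of_pos ht _
        rw [Real.norm_eq_abs, abs_of_nonneg (by positivity)]
        have hE : Real.exp (-(u φ * K * t ^ (-b))) ≤ 1 := by
          rw [Real.exp_le_one_iff]
          linarith [mul_pos hc htb]
        nlinarith [one_div_pos.mpr Real.pi_pos, Real.exp_pos (-(u φ * K * t ^ (-b)))]
      refine hgint.congr ?_
      filter_upwards [ae_restrict_mem measurableSet_Ioo] with φ hφ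
      have hc : 0 < u φ * K := mul_pos (hupos φ hφ) hK
      have hnorm : (∫ τ in Set.Ioo 0 t,
          ‖1 / Real.pi * (u φ * K * b * τ ^ (-b - 1) *
            Real.exp (-(u φ * K * τ ^ (-b))))‖)
          = ∫ τ in Set.Ioo 0 t,
            1 / Real.pi * (u φ * K * b * τ ^ (-b - 1) *
              Real.exp (-(u φ * K * τ ^ (-b)))) := by
        refine integral_congr_ae ?_
        filter_upwards [ae_restrict_mem measurableSet_Ioo] with τ hτ
        have hτ0 : (0 : ℝ) < τ := hτ.1
        have h1 : (0:ℝ) < τ ^ (-b - 1) := Real.rpow_pos_of_pos hτ0 _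
        rw [Real.norm_eq_abs, abs_of_nonneg]
        have := Real.pi_pos
        positivity
      rw [eq_comm]
      rw [hnorm, hinner φ hφ]
  calc ∫ τ in Set.Ioo 0 t, l * α * τ ^ (-(α + 1)) * mwright α (l * τ ^ (-α))
      = ∫ τ in Set.Ioo 0 t, ∫ φ in Set.Ioo 0 Real.pi,
          1 / Real.pi * (u φ * K * b * τ ^ (-b - 1) *
            Real.exp (-(u φ * K * τ ^ (-b)))) := by
        refine integral_congr_ae ?_
        filter_upwards [ae_restrict_mem measurableSet_Ioo] with τ hτ
        exact hA τ hτ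
    _ = ∫ φ in Set.Ioo 0 Real.pi, ∫ τ in Set.Ioo 0 t,
          1 / Real.pi * (u φ * K * b * τ ^ (-b - 1) *
            Real.exp (-(u φ * K * τ ^ (-b)))) :=
        MeasureTheory.integral_integral_swap hFint
    _ = ∫ φ in Set.Ioo 0 Real.pi,
          1 / Real.pi * Real.exp (-(u φ) * (l * t ^ (-α)) ^ (1 / (1 - α))) := by
        refine integral_congr_ae ?_
        filter_upwards [ae_restrict_mem measurableSet_Ioo] with φ hφ
        rw [hinner φ hφ]
        congr 1
        rw [hpow t ht]
        ring
    _ = (1 / Real.pi) * ∫ φ in Set.Ioo 0 Real.pi,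
          Real.exp (-(mwrightKernel α φ) * (l * t ^ (-α)) ^ (1 / (1 - α))) := by
        rw [MeasureTheory.integral_const_mul]
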